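/- Let θ* ∈ ℝ^d, η ≥ 0, and let Q be a probability measure on ℝ^d with mean θ* (∫ θ_i dQ(θ) = θ*_i for each i), uncorrelated coordinates (∫ (θ_i − θ*_i)(θ_j − θ*_j) dQ(θ) = 0 for i ≠ j), and coordinate variances at most η² (∫ (θ_i − θ*_i)² dQ(θ) ≤ η² for each i). Then for every x ∈ ℝ^d with ‖x‖_∞ ≤ 1 and every y ∈ {−1,+1}, ∫ ℓ(θ,x,y) dQ(θ) − ℓ(θ*,x,y) ≤ dη²/8; consequently, for every sequence S_T with ‖x_t‖_∞ ≤ 1 for all t, ∫ L(θ,S_T) dQ(θ) − L(θ*,S_T) ≤ dTη²/8. -/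

import Mathlib

open MeasureTheory Real Filter

noncomputable section

/-- Dot product on `Fin d → ℝ`. -/
def dotp {d : ℕ} (x θ : Fin d → ℝ) : ℝ := ∑ i, x i * θ i

/-- Logistic model probability of label `y ∈ {−1,1}`: `p(y|x,θ) = 1/(1+exp(−y⟨x,θ⟩))`. -/
def lprob {d : ℕ} (θ x : Fin d → ℝ) (y : ℝ) : ℝ :=
  1 / (1 + Real.exp (-(y * dotp x θ)))

/-- Logistic loss `ℓ(θ,x,y) = log(1+exp(−y⟨x,θ⟩))`. -/
def lloss {d : ℕ} (θ x : Fin d → ℝ) (y : ℝ) : ℝ :=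
  Real.log (1 + Real.exp (-(y * dotp x θ)))

/-- Cumulative loss `L(θ,S_T)` of the parameter `θ` on the sequence `S`. -/
def seqLoss {d T : ℕ} (θ : Fin d → ℝ) (S : Fin T → (Fin d → ℝ) × ℝ) : ℝ :=
  ∑ t, lloss θ (S t).1 (S t).2

/-- An online algorithm: maps a history, a current feature vector and a label to a probability. -/
abbrev Alg (d : ℕ) := List ((Fin d → ℝ) × ℝ) → (Fin d → ℝ) → ℝ → ℝ

/-- Validity of an online algorithm: it assigns a probability distribution to the labels `{−1,1}`. -/
def ValidAlg {d : ℕ} (A : Alg d) : Prop :=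
  ∀ h x, 0 ≤ A h x 1 ∧ 0 ≤ A h x (-1) ∧ A h x 1 + A h x (-1) = 1

/-- Validity of a sequence: features have `‖x_t‖_∞ ≤ 1` and labels lie in `{−1,1}`. -/
def ValidSeq {d T : ℕ} (S : Fin T → (Fin d → ℝ) × ℝ) : Prop :=
  ∀ t, (∀ i, |(S t).1 i| ≤ 1) ∧ ((S t).2 = 1 ∨ (S t).2 = -1)

/-- Cumulative loss `L(A,S_T) = −∑_t log A(S_{t−1}, x_t, y_t)` of an online algorithm. -/
def algLoss {d T : ℕ} (A : Alg d) (S : Fin T → (Fin d → ℝ) × ℝ) : ℝ :=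
  -∑ t, Real.log (A ((List.ofFn S).take t.val) (S t).1 (S t).2)

/-- Regret of an online algorithm against a comparator `θ`. -/
def regret {d T : ℕ} (A : Alg d) (S : Fin T → (Fin d → ℝ) × ℝ) (θ : Fin d → ℝ) : ℝ :=
  algLoss A S - seqLoss θ S

/-- `∏_{(x,y) ∈ h} p(y|x,θ)` over a history `h`. -/
def histProb {d : ℕ} (θ : Fin d → ℝ) (h : List ((Fin d → ℝ) × ℝ)) : ℝ :=
  (h.map (fun s => lprob θ s.1 s.2)).prod

/-- Mixture probability `p(y^t|x^t) = ∫ ∏_τ p(y_τ|x_τ,θ) dp₀(θ)`. -/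
def mixProb {d : ℕ} (p₀ : Measure (Fin d → ℝ)) (h : List ((Fin d → ℝ) × ℝ)) : ℝ :=
  ∫ θ, histProb θ h ∂p₀

/-- The Bayesian mixture algorithm with prior `p₀`. -/
def bayesAlg {d : ℕ} (p₀ : Measure (Fin d → ℝ)) : Alg d :=
  fun h x y => mixProb p₀ (h ++ [(x, y)]) / mixProb p₀ h

/-- Discrete mixture probability for a prior given by a probability mass function `p₀`. -/
def mixProbD {d : ℕ} (p₀ : (Fin d → ℝ) → ℝ) (h : List ((Fin d → ℝ) × ℝ)) : ℝ :=
  ∑' θ, p₀ θ * histProb θ h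

/-- The Bayesian mixture algorithm with a discrete prior `p₀`. -/
def bayesAlgD {d : ℕ} (p₀ : (Fin d → ℝ) → ℝ) : Alg d :=
  fun h x y => mixProbD p₀ (h ++ [(x, y)]) / mixProbD p₀ h

/-- Kullback–Leibler divergence `D(Q‖p₀) = ∫ log (dQ/dp₀) dQ`. -/
def KL {d : ℕ} (Q p₀ : Measure (Fin d → ℝ)) : ℝ :=
  ∫ θ, Real.log (Q.rnDeriv p₀ θ).toReal ∂Q

/-- The label in `{−1,1}` encoded by a Boolean. -/
def signv : Bool → ℝ := fun b => if b then 1 else -1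

/-- Binary entropy function (with `h₂(0) = h₂(1) = 0`, since `Real.log 0 = 0`). -/
def binEnt (p : ℝ) : ℝ := -(p * Real.log p) - (1 - p) * Real.log (1 - p)

end

/-! The softplus function `t ↦ log (1 + exp t)` has second derivative `σ (1 - σ) ≤ 1/4`, so it
lies below its tangent line plus `(u - v)² / 8`. Taking `u = -y⟨x,θ⟩`, `v = -y⟨x,θ*⟩` and
integrating against `Q`, the linear term vanishes because `Q` has mean `θ*`, and the quadratic
term is `∑ xᵢ² Var(θᵢ) ≤ dη²` because the coordinates are uncorrelated. -/

open Set

lemma ConvexOn.add_mul_sub_le_of_hasDerivAt {S : Set ℝ} {f : ℝ → ℝ} {f' x y : ℝ}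
    (hf : ConvexOn ℝ S f) (hx : x ∈ S) (hy : y ∈ S) (hd : HasDerivAt f f' x) :
    f x + f' * (y - x) ≤ f y := by
  rcases lt_trichotomy x y with hxy | rfl | hxy
  · have := hf.le_slope_of_hasDerivAt hx hy hxy hd
    rw [slope_def_field, le_div_iff₀ (sub_pos.2 hxy)] at this
    linarith
  · simp
  · have := hf.slope_le_of_hasDerivAt hy hx hxy hd
    rw [slope_def_field, div_le_iff₀ (sub_pos.2 hxy)] at this
    linarith

namespace Real

lemma hasDerivAt_log_one_add_exp (t : ℝ) :
    HasDerivAt (fun t => log (1 + exp t)) (sigmoid t) t := by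
  convert ((hasDerivAt_exp t).const_add 1).log (by positivity) using 1
  rw [sigmoid_def, exp_neg]
  field_simp
  ring

lemma sigmoid_mul_one_sub_sigmoid_le (x : ℝ) : sigmoid x * (1 - sigmoid x) ≤ 1 / 4 := by
  nlinarith [sq_nonneg (2 * sigmoid x - 1)]

lemma hasDerivAt_sq_div_eight_sub_log_one_add_exp (t : ℝ) :
    HasDerivAt (fun t => t ^ 2 / 8 - log (1 + exp t)) (t / 4 - sigmoid t) t :=
  (((hasDerivAt_pow 2 t).div_const 8).sub (hasDerivAt_log_one_add_exp t)).congr_deriv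
    (by push_cast; ring)

lemma convexOn_sq_div_eight_sub_log_one_add_exp :
    ConvexOn ℝ univ (fun t => t ^ 2 / 8 - log (1 + exp t)) := by
  have hf := hasDerivAt_sq_div_eight_sub_log_one_add_exp
  have hf' : ∀ t, HasDerivAt (fun t => t / 4 - sigmoid t)
      (1 / 4 - sigmoid t * (1 - sigmoid t)) t :=
    fun t => ((hasDerivAt_id t).div_const 4).sub (hasDerivAt_sigmoid t)
  refine Monotone.convexOn_univ_of_deriv (fun t => (hf t).differentiableAt) ?_
  rw [show deriv _ = fun t => t / 4 - sigmoid t from funext fun t => (hf t).deriv]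
  refine monotone_of_deriv_nonneg (fun t => (hf' t).differentiableAt) fun t => ?_
  rw [(hf' t).deriv]
  linarith [sigmoid_mul_one_sub_sigmoid_le t]

lemma log_one_add_exp_le (u v : ℝ) :
    log (1 + exp u) ≤ log (1 + exp v) + sigmoid v * (u - v) + (u - v) ^ 2 / 8 := by
  have := convexOn_sq_div_eight_sub_log_one_add_exp.add_mul_sub_le_of_hasDerivAt
    (mem_univ v) (mem_univ u) (hasDerivAt_sq_div_eight_sub_log_one_add_exp v)
  linarith

end Real

lemma sq_sum_mul_eq_sum_sum {ι R : Type*} [Fintype ι] [CommSemiring R] (a b : ι → R) :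
    (∑ i, a i * b i) ^ 2 = ∑ i, ∑ j, a i * a j * (b i * b j) := by
  rw [sq, Finset.sum_mul_sum]
  exact Finset.sum_congr rfl fun i _ => Finset.sum_congr rfl fun j _ => by ring

section Uncorrelated

variable {Ω ι : Type*} [MeasurableSpace Ω] [Fintype ι] {μ : Measure Ω} {X : ι → Ω → ℝ}

lemma integrable_sq_sum_mul (a : ι → ℝ)
    (hX : ∀ i j, Integrable (fun ω => X i ω * X j ω) μ) :
    Integrable (fun ω => (∑ i, a i * X i ω) ^ 2) μ := by
  simp_rw [sq_sum_mul_eq_sum_sum]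
  exact integrable_finsetSum _ fun i _ =>
    integrable_finsetSum _ fun j _ => (hX i j).const_mul _

lemma integral_sq_sum_mul_of_uncorrelated (a : ι → ℝ)
    (hX : ∀ i j, Integrable (fun ω => X i ω * X j ω) μ)
    (huncorr : ∀ i j, i ≠ j → ∫ ω, X i ω * X j ω ∂μ = 0) :
    ∫ ω, (∑ i, a i * X i ω) ^ 2 ∂μ = ∑ i, a i ^ 2 * ∫ ω, X i ω ^ 2 ∂μ := by
  simp_rw [sq_sum_mul_eq_sum_sum]
  rw [integral_finsetSum _ fun i _ =>
    integrable_finsetSum _ fun j _ => (hX i j).const_mul _]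
  refine Finset.sum_congr rfl fun i _ => ?_
  rw [integral_finsetSum _ fun j _ => (hX i j).const_mul _]
  simp_rw [integral_const_mul]
  rw [Finset.sum_eq_single i (fun j _ hji => by rw [huncorr i j hji.symm, mul_zero])
    (by simp)]
  simp_rw [sq]

end Uncorrelated

lemma dotp_sub_dotp {d : ℕ} (x θ θs : Fin d → ℝ) :
    dotp x θ - dotp x θs = ∑ i, x i * (θ i - θs i) := by
  simp only [dotp, ← Finset.sum_sub_distrib, mul_sub]

lemma continuous_lloss {d : ℕ} (x : Fin d → ℝ) (y : ℝ) : Continuous fun θ => lloss θ x y := by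
  unfold lloss dotp
  fun_prop (disch := intro θ; positivity)

lemma lloss_nonneg {d : ℕ} (θ x : Fin d → ℝ) (y : ℝ) : 0 ≤ lloss θ x y :=
  log_nonneg (le_add_of_nonneg_right (exp_pos _).le)

lemma lloss_le {d : ℕ} (θ θs x : Fin d → ℝ) (y : ℝ) :
    lloss θ x y ≤ lloss θs x y - sigmoid (-(y * dotp x θs)) * y * (dotp x θ - dotp x θs)
      + y ^ 2 * (dotp x θ - dotp x θs) ^ 2 / 8 := by
  have := log_one_add_exp_le (-(y * dotp x θ)) (-(y * dotp x θs))
  unfold lloss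
  linarith

section Logistic

variable {d : ℕ} {Q : Measure (Fin d → ℝ)} {θs : Fin d → ℝ}

lemma integrable_dotp_sub [IsFiniteMeasure Q]
    (hmeanint : ∀ i, Integrable (fun θ => θ i) Q) (x : Fin d → ℝ) :
    Integrable (fun θ => dotp x θ - dotp x θs) Q := by
  simp_rw [dotp_sub_dotp]
  exact integrable_finsetSum _ fun i _ => ((hmeanint i).sub (integrable_const _)).const_mul _

lemma integral_dotp_sub [IsProbabilityMeasure Q]
    (hmeanint : ∀ i, Integrable (fun θ => θ i) Q)
    (hmean : ∀ i, ∫ θ, θ i ∂Q = θs i) (x : Fin d → ℝ) :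
    ∫ θ, (dotp x θ - dotp x θs) ∂Q = 0 := by
  have hδ (i : Fin d) : Integrable (fun θ => θ i - θs i) Q :=
    (hmeanint i).sub (integrable_const _)
  simp_rw [dotp_sub_dotp]
  rw [integral_finsetSum _ fun i _ => (hδ i).const_mul _]
  refine Finset.sum_eq_zero fun i _ => ?_
  rw [integral_const_mul, integral_sub (hmeanint i) (integrable_const _), hmean i,
    integral_const, probReal_univ, one_smul, sub_self, mul_zero]

lemma integrable_sq_dotp_sub
    (hmomint : ∀ i j, Integrable (fun θ => (θ i - θs i) * (θ j - θs j)) Q)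
    (x : Fin d → ℝ) : Integrable (fun θ => (dotp x θ - dotp x θs) ^ 2) Q := by
  simp_rw [dotp_sub_dotp]
  exact integrable_sq_sum_mul x hmomint

lemma integral_sq_dotp_sub_le {η : ℝ}
    (hmomint : ∀ i j, Integrable (fun θ => (θ i - θs i) * (θ j - θs j)) Q)
    (huncorr : ∀ i j, i ≠ j → ∫ θ, (θ i - θs i) * (θ j - θs j) ∂Q = 0)
    (hvar : ∀ i, ∫ θ, (θ i - θs i) ^ 2 ∂Q ≤ η ^ 2) {x : Fin d → ℝ} (hx : ∀ i, |x i| ≤ 1) :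
    ∫ θ, (dotp x θ - dotp x θs) ^ 2 ∂Q ≤ d * η ^ 2 := by
  simp_rw [dotp_sub_dotp]
  rw [integral_sq_sum_mul_of_uncorrelated x hmomint huncorr]
  calc ∑ i, x i ^ 2 * ∫ θ, (θ i - θs i) ^ 2 ∂Q
      ≤ ∑ i, ∫ θ, (θ i - θs i) ^ 2 ∂Q :=
        Finset.sum_le_sum fun i _ => mul_le_of_le_one_left
          (integral_nonneg fun θ => sq_nonneg _) (sq_le_one_iff_abs_le_one _ |>.2 (hx i))
    _ ≤ ∑ _i : Fin d, η ^ 2 := Finset.sum_le_sum fun i _ => hvar i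
    _ = d * η ^ 2 := by simp

lemma integrable_lloss_majorant [IsFiniteMeasure Q]
    (hmeanint : ∀ i, Integrable (fun θ => θ i) Q)
    (hmomint : ∀ i j, Integrable (fun θ => (θ i - θs i) * (θ j - θs j)) Q)
    (x : Fin d → ℝ) (y : ℝ) :
    Integrable (fun θ => lloss θs x y
      - sigmoid (-(y * dotp x θs)) * y * (dotp x θ - dotp x θs)
      + y ^ 2 * (dotp x θ - dotp x θs) ^ 2 / 8) Q :=
  ((integrable_const _).sub ((integrable_dotp_sub hmeanint x).const_mul _)).add
    (((integrable_sq_dotp_sub hmomint x).const_mul _).div_const 8)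

lemma integrable_lloss [IsFiniteMeasure Q]
    (hmeanint : ∀ i, Integrable (fun θ => θ i) Q)
    (hmomint : ∀ i j, Integrable (fun θ => (θ i - θs i) * (θ j - θs j)) Q)
    (x : Fin d → ℝ) (y : ℝ) : Integrable (fun θ => lloss θ x y) Q :=
  (integrable_lloss_majorant hmeanint hmomint x y).mono'
    (continuous_lloss x y).aestronglyMeasurable <| ae_of_all _ fun θ => by
      rw [norm_of_nonneg (lloss_nonneg θ x y)]
      exact lloss_le θ θs x y

lemma integral_lloss_sub_le [IsProbabilityMeasure Q] {η : ℝ}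
    (hmeanint : ∀ i, Integrable (fun θ => θ i) Q)
    (hmomint : ∀ i j, Integrable (fun θ => (θ i - θs i) * (θ j - θs j)) Q)
    (hmean : ∀ i, ∫ θ, θ i ∂Q = θs i)
    (huncorr : ∀ i j, i ≠ j → ∫ θ, (θ i - θs i) * (θ j - θs j) ∂Q = 0)
    (hvar : ∀ i, ∫ θ, (θ i - θs i) ^ 2 ∂Q ≤ η ^ 2) {x : Fin d → ℝ} (hx : ∀ i, |x i| ≤ 1)
    {y : ℝ} (hy : y ^ 2 ≤ 1) :
    ∫ θ, lloss θ x y ∂Q - lloss θs x y ≤ d * η ^ 2 / 8 := by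
  have hD := integrable_dotp_sub (θs := θs) hmeanint x
  have hD2 := integrable_sq_dotp_sub hmomint x
  have hmajorant : ∫ θ, lloss θ x y ∂Q ≤ lloss θs x y
      + y ^ 2 * (∫ θ, (dotp x θ - dotp x θs) ^ 2 ∂Q) / 8 := by
    refine (integral_mono (integrable_lloss hmeanint hmomint x y)
      (integrable_lloss_majorant hmeanint hmomint x y) fun θ => lloss_le θ θs x y).trans_eq ?_
    rw [integral_add, integral_sub, integral_const_mul, integral_dotp_sub hmeanint hmean,
      integral_div, integral_const_mul]
    · simp
    exacts [integrable_const _, hD.const_mul _, (integrable_const _).sub (hD.const_mul _),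
      (hD2.const_mul _).div_const 8]
  have hvar_le := integral_sq_dotp_sub_le hmomint huncorr hvar hx
  have hvar_nonneg : 0 ≤ ∫ θ, (dotp x θ - dotp x θs) ^ 2 ∂Q :=
    integral_nonneg fun θ => sq_nonneg _
  nlinarith

end Logistic

theorem stmt3_general {d : ℕ} (Q : Measure (Fin d → ℝ)) [IsProbabilityMeasure Q]
    (θs : Fin d → ℝ) (η : ℝ)
    (hmeanint : ∀ i, Integrable (fun θ => θ i) Q)
    (hmomint : ∀ i j, Integrable (fun θ => (θ i - θs i) * (θ j - θs j)) Q)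
    (hmean : ∀ i, ∫ θ, θ i ∂Q = θs i)
    (huncorr : ∀ i j, i ≠ j → ∫ θ, (θ i - θs i) * (θ j - θs j) ∂Q = 0)
    (hvar : ∀ i, ∫ θ, (θ i - θs i) ^ 2 ∂Q ≤ η ^ 2) :
    (∀ x : Fin d → ℝ, (∀ i, |x i| ≤ 1) → ∀ y : ℝ, y = 1 ∨ y = -1 →
      (∫ θ, lloss θ x y ∂Q) - lloss θs x y ≤ d * η ^ 2 / 8) ∧
    (∀ T : ℕ, ∀ S : Fin T → (Fin d → ℝ) × ℝ, ValidSeq S →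
      (∫ θ, seqLoss θ S ∂Q) - seqLoss θs S ≤ d * T * η ^ 2 / 8) := by
  have hstep (x : Fin d → ℝ) (hx : ∀ i, |x i| ≤ 1) (y : ℝ) (hy : y = 1 ∨ y = -1) :
      (∫ θ, lloss θ x y ∂Q) - lloss θs x y ≤ d * η ^ 2 / 8 :=
    integral_lloss_sub_le hmeanint hmomint hmean huncorr hvar hx
      (by rcases hy with rfl | rfl <;> norm_num)
  refine ⟨hstep, fun T S hS => ?_⟩
  unfold seqLoss
  rw [integral_finsetSum _ fun t _ => integrable_lloss hmeanint hmomint _ _,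
    ← Finset.sum_sub_distrib]
  calc ∑ t, ((∫ θ, lloss θ (S t).1 (S t).2 ∂Q) - lloss θs (S t).1 (S t).2)
      ≤ ∑ _t : Fin T, d * η ^ 2 / 8 :=
        Finset.sum_le_sum fun t _ => hstep _ (hS t).1 _ (hS t).2
    _ = d * T * η ^ 2 / 8 := by
      rw [Finset.sum_const, Finset.card_univ, Fintype.card_fin, nsmul_eq_mul]
      ring

/-- second-order (Taylor) bound on the excess expected logistic loss of a
mean-`θ*` distribution `Q` with uncorrelated coordinates of variance at most `η²`:
per example `∫ ℓ(θ,x,y) dQ − ℓ(θ*,x,y) ≤ dη²/8`, hence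
`∫ L(θ,S_T) dQ − L(θ*,S_T) ≤ dTη²/8`. -/
theorem stmt3 {d : ℕ} (Q : Measure (Fin d → ℝ)) [IsProbabilityMeasure Q]
    (θs : Fin d → ℝ) (η : ℝ) (hη : 0 ≤ η)
    (hmeanint : ∀ i, Integrable (fun θ => θ i) Q)
    (hmomint : ∀ i j, Integrable (fun θ => (θ i - θs i) * (θ j - θs j)) Q)
    (hmean : ∀ i, ∫ θ, θ i ∂Q = θs i)
    (huncorr : ∀ i j, i ≠ j → ∫ θ, (θ i - θs i) * (θ j - θs j) ∂Q = 0)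
    (hvar : ∀ i, ∫ θ, (θ i - θs i) ^ 2 ∂Q ≤ η ^ 2) :
    (∀ x : Fin d → ℝ, (∀ i, |x i| ≤ 1) → ∀ y : ℝ, y = 1 ∨ y = -1 →
      (∫ θ, lloss θ x y ∂Q) - lloss θs x y ≤ d * η ^ 2 / 8) ∧
    (∀ T : ℕ, ∀ S : Fin T → (Fin d → ℝ) × ℝ, ValidSeq S →
      (∫ θ, seqLoss θ S ∂Q) - seqLoss θs S ≤ d * T * η ^ 2 / 8) :=
  stmt3_general Q θs η hmeanint hmomint hmean huncorr hvar
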